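/- arXiv:2004.06537 — 4 statements merged into one kernel-verified Lean document; each statement's English description precedes it below -/
import Mathlib

section
/- Let X be a first countable topological space such that the closure in C_p(X) of every subset of C_p(X,[0,1]) that is countably compact in C_p(X) is compact (X is weakly Grothendieck). Then for A ⊆ C_p(X,[0,1]), A is relatively compact in C_p(X) if and only if for every pair of sequences ⟨fₙ⟩ in A and ⟨xₘ⟩ in X and all ultrafilters 𝒰, 𝒱 on ℕ, whenever lim_{m→𝒱} xₘ exists in X, the double ultralimits lim_{n→𝒰} lim_{m→𝒱} fₙ(xₘ) and lim_{m→𝒱} lim_{n→𝒰} fₙ(xₘ) are equal. -/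
/-!
If `closure A` is compact, a sequence `fₙ` in `A` has an ultralimit `F ∈ C_p(X)` along `𝒰`;
then `lim_{m→𝒱} fₙ(xₘ) = fₙ(y)` and `lim_{n→𝒰} fₙ(xₘ) = F(xₘ)`, so by continuity of `fₙ` and
`F` both iterated limits equal `F(y)`.

Conversely, since `X` is weakly Grothendieck it suffices to show that `A` is countably compact
in `C_p(X)`. Enumerate an infinite `S ⊆ A` injectively and let `F` be its pointwise limit along
a free ultrafilter, which exists in `[0,1]^X`. For a sequence `xₘ → y` the double limit condition
reads `F(y) = lim_{m→𝒱} F(xₘ)` for every ultrafilter `𝒱`, so `F` is sequentially continuous,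
hence continuous as `X` is first countable, and `F` is then a limit point of `S`.
-/

open Filter Topology

/-- The space `C_p(X)` of continuous real-valued functions on `X` with the
topology of pointwise convergence (inherited from the product topology). -/
def Cp (X : Type*) [TopologicalSpace X] : Type _ := {f : X → ℝ // Continuous f}

instance (X : Type*) [TopologicalSpace X] : TopologicalSpace (Cp X) :=
  instTopologicalSpaceSubtype

/-- `p` is a limit point of `S`. -/
def IsLimitPt {Y : Type*} [TopologicalSpace Y] (S : Set Y) (p : Y) : Prop :=
  p ∈ closure (S \ {p})

/-- `A` is countably compact in the ambient space `Y`: every infinite subset of `A`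
has a limit point in `Y`. -/
def CountablyCompactIn {Y : Type*} [TopologicalSpace Y] (A : Set Y) : Prop :=
  ∀ S ⊆ A, S.Infinite → ∃ p : Y, IsLimitPt S p

open Function

theorem IsCompact.exists_tendsto_ultrafilter {Y ι : Type*} [TopologicalSpace Y] {K : Set Y}
    (hK : IsCompact K) {u : ι → Y} (hu : ∀ i, u i ∈ K) (𝒰 : Ultrafilter ι) :
    ∃ c ∈ K, Tendsto u 𝒰 (𝓝 c) :=
  hK.ultrafilter_le_nhds' (𝒰.map u) (mem_map.2 (univ_mem' hu))

theorem isLimitPt_of_tendsto_of_injective {Y ι : Type*} [TopologicalSpace Y] {l : Filter ι}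
    [l.NeBot] (hl : l ≤ cofinite) {u : ι → Y} (hu : Injective u) {S : Set Y}
    (huS : ∀ i, u i ∈ S) {p : Y} (hp : Tendsto u l (𝓝 p)) : IsLimitPt S p := by
  have hne : ∀ᶠ i in l, u i ≠ p := hl (hu.tendsto_cofinite.eventually (eventually_cofinite_ne p))
  exact mem_closure_of_tendsto hp (hne.mono fun i hi => ⟨huS i, hi⟩)

theorem continuous_of_ultrafilter_seq {X Y : Type*} [TopologicalSpace X]
    [SequentialSpace X] [TopologicalSpace Y] {K : Set Y} (hK : IsCompact K) {F : X → Y}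
    (hFK : ∀ z, F z ∈ K)
    (hF : ∀ (x : ℕ → X) (y : X) (𝒱 : Ultrafilter ℕ) (β : Y),
      Tendsto x 𝒱 (𝓝 y) → Tendsto (F ∘ x) 𝒱 (𝓝 β) → F y = β) :
    Continuous F := by
  refine continuous_iff_seqContinuous.2 fun x y hxy => tendsto_iff_ultrafilter _ _ _ |>.2 ?_
  intro 𝒱 h𝒱
  obtain ⟨β, -, hβ⟩ := hK.exists_tendsto_ultrafilter (fun m => hFK (x m)) 𝒱
  rwa [hF x y 𝒱 β (hxy.mono_left h𝒱) hβ]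

namespace Cp

variable {X : Type*} [TopologicalSpace X]

theorem continuous_eval (z : X) : Continuous fun F : Cp X => F.1 z :=
  (continuous_apply z).comp continuous_subtype_val

theorem tendsto_nhds_iff {ι : Type*} {l : Filter ι} {f : ι → Cp X} {F : Cp X} :
    Tendsto f l (𝓝 F) ↔ ∀ z, Tendsto (fun i => (f i).1 z) l (𝓝 (F.1 z)) :=
  tendsto_subtype_rng.trans tendsto_pi_nhds

theorem iterated_limits_eq_of_tendsto {ι κ : Type*} {l₁ : Filter ι} {l₂ : Filter κ}
    [l₁.NeBot] [l₂.NeBot] {f : ι → Cp X} {F : Cp X} (hf : Tendsto f l₁ (𝓝 F))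
    {x : κ → X} {y : X} (hx : Tendsto x l₂ (𝓝 y)) {g : ι → ℝ} {h : κ → ℝ} {α β : ℝ}
    (hg : ∀ n, Tendsto (fun m => (f n).1 (x m)) l₂ (𝓝 (g n))) (hgα : Tendsto g l₁ (𝓝 α))
    (hh : ∀ m, Tendsto (fun n => (f n).1 (x m)) l₁ (𝓝 (h m))) (hhβ : Tendsto h l₂ (𝓝 β)) :
    α = β := by
  have hg' : g = fun n => (f n).1 y :=
    funext fun n => tendsto_nhds_unique (hg n) (((f n).2.tendsto y).comp hx)
  have hh' : h = fun m => F.1 (x m) :=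
    funext fun m => tendsto_nhds_unique (hh m) (tendsto_nhds_iff.1 hf (x m))
  subst hg' hh'
  calc α = F.1 y := tendsto_nhds_unique hgα (tendsto_nhds_iff.1 hf y)
    _ = β := tendsto_nhds_unique ((F.2.tendsto y).comp hx) hhβ

end Cp

/-- in a first countable weakly Grothendieck space, relative compactness of
`A ⊆ C_p(X,[0,1])` in `C_p(X)` is equivalent to the double ultralimit condition. -/
theorem stmt_3 {X : Type*} [TopologicalSpace X] [FirstCountableTopology X]
    (hWG : ∀ B : Set (Cp X), (∀ f ∈ B, ∀ x, f.1 x ∈ Set.Icc (0:ℝ) 1) →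
      CountablyCompactIn B → IsCompact (closure B))
    (A : Set (Cp X)) (hA : ∀ f ∈ A, ∀ x, f.1 x ∈ Set.Icc (0:ℝ) 1) :
    IsCompact (closure A) ↔
      ∀ f : ℕ → Cp X, (∀ n, f n ∈ A) → ∀ (x : ℕ → X) (𝒰 𝒱 : Ultrafilter ℕ) (y : X),
        Tendsto x ↑𝒱 (𝓝 y) →
        ∀ (g h : ℕ → ℝ) (α β : ℝ),
          (∀ n, Tendsto (fun m => (f n).1 (x m)) ↑𝒱 (𝓝 (g n))) →
          Tendsto g ↑𝒰 (𝓝 α) →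
          (∀ m, Tendsto (fun n => (f n).1 (x m)) ↑𝒰 (𝓝 (h m))) →
          Tendsto h ↑𝒱 (𝓝 β) →
          α = β := by
  constructor
  · intro hcomp f hf x 𝒰 𝒱 y hxy g h α β hg hgα hh hhβ
    obtain ⟨F, -, hF⟩ := hcomp.exists_tendsto_ultrafilter (fun n => subset_closure (hf n)) 𝒰
    exact Cp.iterated_limits_eq_of_tendsto hF hxy hg hgα hh hhβ
  · intro H
    refine hWG A hA fun S hSA hSinf => ?_
    let e := hSinf.natEmbedding
    let f : ℕ → Cp X := fun n => e n
    have hfA : ∀ n, f n ∈ A := fun n => hSA (e n).2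
    let 𝒰 : Ultrafilter ℕ := .of cofinite
    choose F hFI hF using fun z =>
      isCompact_Icc.exists_tendsto_ultrafilter (fun n => hA _ (hfA n) z) 𝒰
    have hFcont : Continuous F := continuous_of_ultrafilter_seq isCompact_Icc hFI
      fun x y 𝒱 β hx hβ => H f hfA x 𝒰 𝒱 y hx _ _ _ _
        (fun n => ((f n).2.tendsto y).comp hx) (hF y) (fun m => hF (x m)) hβ
    exact ⟨⟨F, hFcont⟩, isLimitPt_of_tendsto_of_injective (Ultrafilter.of_le _)
      (Subtype.val_injective.comp e.injective) (fun n => (e n).2) (Cp.tendsto_nhds_iff.2 hF)⟩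
end

section
/- Let φ : A × B → [0,1] be a function such that for all sequences ⟨aₙ⟩ in A, ⟨bₘ⟩ in B, and all ultrafilters 𝒰, 𝒱 on ℕ, the double ultralimits lim_{n→𝒰} lim_{m→𝒱} φ(aₙ,bₘ) and lim_{m→𝒱} lim_{n→𝒰} φ(aₙ,bₘ) are equal. Then there do not exist sequences ⟨aₙ⟩, ⟨bₘ⟩ such that φ(aₙ,bₘ) = 1 whenever n < m and φ(aₙ,bₘ) = 0 whenever m < n. -/
open Filter Topology

/-- stability (equal double ultralimits) rules out the order property. -/
theorem stmt_7 {A B : Type*} (φ : A → B → ℝ)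
    (hrange : ∀ x y, φ x y ∈ Set.Icc (0:ℝ) 1)
    (hstable : ∀ (a : ℕ → A) (b : ℕ → B) (𝒰 𝒱 : Ultrafilter ℕ)
      (g h : ℕ → ℝ) (α β : ℝ),
        (∀ n, Tendsto (fun m => φ (a n) (b m)) ↑𝒱 (𝓝 (g n))) →
        Tendsto g ↑𝒰 (𝓝 α) →
        (∀ m, Tendsto (fun n => φ (a n) (b m)) ↑𝒰 (𝓝 (h m))) →
        Tendsto h ↑𝒱 (𝓝 β) →
        α = β) :
    ¬ ∃ (a : ℕ → A) (b : ℕ → B),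
        (∀ n m, n < m → φ (a n) (b m) = 1) ∧
        (∀ n m, m < n → φ (a n) (b m) = 0) := by
  rintro ⟨a, b, h1, h0⟩
  obtain ⟨𝒰, h𝒰⟩ := Filter.exists_ultrafilter_le (atTop : Filter ℕ)
  have hg : ∀ n, Tendsto (fun m => φ (a n) (b m)) ↑𝒰 (𝓝 1) := by
    intro n
    refine (tendsto_const_nhds : Tendsto (fun _ : ℕ => (1:ℝ)) ↑𝒰 _).congr' ?_
    filter_upwards [h𝒰 (eventually_gt_atTop n)] with m hm
    exact (h1 n m hm).symm
  have hh : ∀ m, Tendsto (fun n => φ (a n) (b m)) ↑𝒰 (𝓝 0) := by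
    intro m
    refine (tendsto_const_nhds : Tendsto (fun _ : ℕ => (0:ℝ)) ↑𝒰 _).congr' ?_
    filter_upwards [h𝒰 (eventually_gt_atTop m)] with n hn
    exact (h0 n m hn).symm
  have := hstable a b 𝒰 𝒰 (fun _ => 1) (fun _ => 0) 1 0 hg tendsto_const_nhds hh
    tendsto_const_nhds
  norm_num at this
end

section
/- Every countably compact topological space X is weakly Grothendieck: if A ⊆ C_p(X) is countably compact in C_p(X) (every infinite subset of A has a limit point in C_p(X)), then the closure of A in C_p(X) is compact. -/
open Filter Topology

/-- `X` is countably compact: every countable open cover has a finite subcover. -/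
def CountablyCompact (X : Type*) [TopologicalSpace X] : Prop :=
  ∀ U : ℕ → Set X, (∀ n, IsOpen (U n)) → (⋃ n, U n) = Set.univ →
    ∃ F : Finset ℕ, (⋃ n ∈ F, U n) = Set.univ

/-!
If `f` is a pointwise limit of `A` that is discontinuous at `x₀`, interlace `fₙ ∈ A` and points
`xₙ` with `ε ≤ |f xₙ - f x₀|` so that `fₙ → f` at `x₀` and at every `xₘ`, while `fₘ xₙ → fₘ x₀`.
A cluster point `z` of `(xₙ)` satisfies `fₘ z = fₘ x₀`; a cluster point `g ∈ C_p(X)` of `(fₙ)`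
then has `g z = f x₀` and `g xₙ = f xₙ`, which contradicts the continuity of `g` at `z`. So the
closure of `A` in `ℝ^X` lies in `C_p(X)`; it is compact because `A` is pointwise bounded.
-/

theorem Cp.isEmbedding_val (X : Type*) [TopologicalSpace X] :
    @Topology.IsEmbedding (Cp X) (X → ℝ) _ _ Subtype.val :=
  Topology.IsEmbedding.subtypeVal

instance (X : Type*) [TopologicalSpace X] : T2Space (Cp X) :=
  (Cp.isEmbedding_val X).t2Space

theorem CountablyCompact.countablyCompactSpace {X : Type*} [TopologicalSpace X]
    (hX : CountablyCompact X) : CountablyCompactSpace X :=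
  ⟨isCountablyCompact_iff_countable_open_cover.2 fun U hU hcov => by
    obtain ⟨t, ht⟩ := hX U hU (Set.univ_subset_iff.1 hcov)
    exact ⟨t, ht.symm.subset⟩⟩

theorem isLimitPt_iff_accPt {Y : Type*} [TopologicalSpace Y] {S : Set Y} {p : Y} :
    IsLimitPt S p ↔ AccPt p (𝓟 S) := by
  rw [IsLimitPt, mem_closure_iff_clusterPt, accPt_principal_iff_clusterPt]

theorem MapClusterPt.eq_of_tendsto {α Y : Type*} [TopologicalSpace Y] [T2Space Y]
    {l : Filter α} {u : α → Y} {x y : Y} (hx : MapClusterPt x l u) (hy : Tendsto u l (𝓝 y)) :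
    x = y :=
  eq_of_nhds_neBot (hx.neBot.mono (inf_le_inf_left _ hy))

section CountablyCompactIn

variable {Y : Type*} [TopologicalSpace Y] [T1Space Y] {A : Set Y}

theorem CountablyCompactIn.exists_mapClusterPt (hA : CountablyCompactIn A) {u : ℕ → Y}
    (hu : ∀ n, u n ∈ A) : ∃ p, MapClusterPt p atTop u := by
  rw [← Nat.cofinite_eq_atTop]
  by_cases hfin : (Set.range u).Finite
  · obtain ⟨p, -, hp⟩ := hfin.isCompact.exists_mapClusterPt_of_frequently
      (Frequently.of_forall Set.mem_range_self : ∃ᶠ n in cofinite, u n ∈ Set.range u)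
    exact ⟨p, hp⟩
  · obtain ⟨p, hp⟩ := hA _ (Set.range_subset_iff.2 hu) hfin
    refine ⟨p, mapClusterPt_iff_frequently.2 fun s hs => ?_⟩
    rw [frequently_cofinite_iff_infinite]
    refine Set.Infinite.of_image u ((Set.Infinite.of_accPt
      ((isLimitPt_iff_accPt.1 hp).nhds_inter hs)).mono ?_)
    rintro _ ⟨hy, n, rfl⟩
    exact ⟨n, hy, rfl⟩

theorem CountablyCompactIn.exists_abs_le (hA : CountablyCompactIn A) {φ : Y → ℝ}
    (hφ : Continuous φ) : ∃ M, ∀ y ∈ A, |φ y| ≤ M := by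
  by_contra! h
  choose u huA hu using fun n : ℕ => h n
  obtain ⟨p, hp⟩ := hA.exists_mapClusterPt huA
  have hnear : ∃ᶠ n in atTop, |φ (u n)| < |φ p| + 1 :=
    (hp.continuousAt_comp hφ.continuousAt).frequently
      ((continuous_abs.tendsto _).eventually (gt_mem_nhds (lt_add_one _)))
  obtain ⟨n, hn, hlarge⟩ := (hnear.and_eventually
    (tendsto_natCast_atTop_atTop (R := ℝ) |>.eventually_gt_atTop (|φ p| + 1))).exists
  linarith [hu n]

end CountablyCompactIn

theorem exists_mem_forall_dist_lt {ι : Type*} {Q : Set (ι → ℝ)} {f : ι → ℝ} (hf : f ∈ closure Q)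
    (t : Finset ι) {δ : ℝ} (hδ : 0 < δ) : ∃ q ∈ Q, ∀ i ∈ t, dist (q i) (f i) < δ :=
  (mem_closure_iff_frequently.1 hf |>.and_eventually ((eventually_all_finset t).2 fun i _ =>
    (continuous_apply i).continuousAt.eventually (Metric.ball_mem_nhds _ hδ))).exists

theorem tendsto_of_eventually_dist_lt {α β : Type*} [PseudoMetricSpace α] {l : Filter β}
    {u : β → α} {c : α} {δ : β → ℝ} (hδ : Tendsto δ l (𝓝 0))
    (h : ∀ᶠ n in l, dist (u n) c < δ n) : Tendsto u l (𝓝 c) :=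
  tendsto_iff_dist_tendsto_zero.2 <|
    squeeze_zero' (Eventually.of_forall fun _ => dist_nonneg) (h.mono fun _ hn => hn.le) hδ

section Grothendieck

variable {X : Type*} [TopologicalSpace X] {A : Set (Cp X)}

theorem exists_interlaced_seq {f : X → ℝ} {x₀ : X} {ε : ℝ}
    (hf : f ∈ closure (Subtype.val '' A)) (hfar : ∃ᶠ x in 𝓝 x₀, ε ≤ dist (f x) (f x₀)) :
    ∃ (F : ℕ → Cp X) (x : ℕ → X), (∀ n, F n ∈ A) ∧ (∀ n, ε ≤ dist (f (x n)) (f x₀)) ∧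
      (∀ y ∈ insert x₀ (Set.range x), Tendsto (fun n => (F n).1 y) atTop (𝓝 (f y))) ∧
      ∀ m, Tendsto (fun n => (F m).1 (x n)) atTop (𝓝 ((F m).1 x₀)) := by
  classical
  -- A term `(k, h, x)` carries a level `k`, strictly increasing along the sequence, which fixes
  -- the precision `1 / (k + 1)` of the approximations made at that term.
  obtain ⟨a, hP, hr⟩ := exists_seq_of_forall_finset_exists
    (fun a : ℕ × Cp X × X => a.2.1 ∈ A ∧ dist (a.2.1.1 x₀) (f x₀) < 1 / (a.1 + 1) ∧
      ε ≤ dist (f a.2.2) (f x₀))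
    (fun a b => a.1 < b.1 ∧ dist (b.2.1.1 a.2.2) (f a.2.2) < 1 / (b.1 + 1) ∧
      dist (a.2.1.1 b.2.2) (a.2.1.1 x₀) < 1 / (b.1 + 1))
    (by
      intro s _
      set k := s.sup Prod.fst + 1
      have hδ : (0 : ℝ) < 1 / (k + 1) := by positivity
      obtain ⟨_, ⟨h, hA, rfl⟩, hh⟩ :=
        exists_mem_forall_dist_lt hf (insert x₀ (s.image fun a => a.2.2)) hδ
      obtain ⟨x, hxfar, hx⟩ := (hfar.and_eventually ((eventually_all_finset s).2 fun a _ =>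
        a.2.1.2.continuousAt.eventually (Metric.ball_mem_nhds _ hδ))).exists
      refine ⟨(k, h, x), ⟨hA, hh x₀ (Finset.mem_insert_self _ _), hxfar⟩, fun a ha =>
        ⟨Nat.lt_succ_of_le (Finset.le_sup ha),
          hh _ (Finset.mem_insert_of_mem (Finset.mem_image_of_mem _ ha)), hx a ha⟩⟩)
  have hδ : Tendsto (fun n => 1 / ((a n).1 + 1 : ℝ)) atTop (𝓝 0) :=
    tendsto_one_div_add_atTop_nhds_zero_nat.comp
      (StrictMono.tendsto_atTop fun m n hmn => (hr m n hmn).1)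
  refine ⟨fun n => (a n).2.1, fun n => (a n).2.2, fun n => (hP n).1, fun n => (hP n).2.2, ?_,
    fun m => tendsto_of_eventually_dist_lt hδ
      ((eventually_gt_atTop m).mono fun n hn => (hr m n hn).2.2)⟩
  rintro y (rfl | ⟨m, rfl⟩)
  · exact tendsto_of_eventually_dist_lt hδ (Eventually.of_forall fun n => (hP n).2.1)
  · exact tendsto_of_eventually_dist_lt hδ
      ((eventually_gt_atTop m).mono fun n hn => (hr m n hn).2.1)

theorem continuous_of_mem_closure [CountablyCompactSpace X] (hA : CountablyCompactIn A)
    {f : X → ℝ} (hf : f ∈ closure (Subtype.val '' A)) : Continuous f := by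
  refine continuous_iff_continuousAt.2 fun x₀ => by_contra fun hnc => ?_
  obtain ⟨ε, hε, hfar⟩ : ∃ ε > 0, ∃ᶠ x in 𝓝 x₀, ε ≤ dist (f x) (f x₀) := by
    simpa [ContinuousAt, Metric.tendsto_nhds, Filter.not_eventually] using hnc
  obtain ⟨F, x, hFA, hxfar, hFf, hFx⟩ := exists_interlaced_seq hf hfar
  obtain ⟨z, -, hz⟩ := CountablyCompactSpace.isCountablyCompact_univ.seq_clusterPt x
    (Eventually.of_forall fun _ => Set.mem_univ _)
  obtain ⟨g, hg⟩ := hA.exists_mapClusterPt hFA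
  have hFz (m : ℕ) : (F m).1 z = (F m).1 x₀ :=
    (hz.continuousAt_comp (F m).2.continuousAt).eq_of_tendsto (hFx m)
  have hg_apply {y : X} {c : ℝ} (h : Tendsto (fun n => (F n).1 y) atTop (𝓝 c)) : g.1 y = c :=
    (hg.continuousAt_comp ((continuous_apply y).comp continuous_subtype_val).continuousAt
      ).eq_of_tendsto h
  have hgz : g.1 z = f x₀ :=
    hg_apply (by simpa only [hFz] using hFf x₀ (Set.mem_insert _ _))
  have hgx (n : ℕ) : g.1 (x n) = f (x n) :=
    hg_apply (hFf _ (Set.mem_insert_of_mem _ (Set.mem_range_self n)))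
  obtain ⟨n, hn⟩ := ((hz.continuousAt_comp g.2.continuousAt).frequently
    (Metric.ball_mem_nhds _ hε)).exists
  exact (hxfar n).not_gt (by simpa [hgx, hgz] using hn)

end Grothendieck

/-- Grothendieck's theorem: every countably compact space is weakly
Grothendieck: any `A ⊆ C_p(X)` countably compact in `C_p(X)` has compact closure. -/
theorem stmt_13 {X : Type*} [TopologicalSpace X] (hX : CountablyCompact X)
    (A : Set (Cp X)) (hA : CountablyCompactIn A) :
    IsCompact (closure A) := by
  have := hX.countablyCompactSpace
  choose M hM using fun x => hA.exists_abs_le ((continuous_apply x).comp continuous_subtype_val)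
  have hbdd : IsCompact (closure (Subtype.val '' A)) :=
    (isCompact_univ_pi fun x => isCompact_Icc (a := -M x) (b := M x)).closure_of_subset
      (by rintro _ ⟨g, hg, rfl⟩ x -; exact abs_le.1 (hM x g hg))
  have himage : Subtype.val '' closure A = closure (Subtype.val '' A) :=
    (congrArg _ ((Cp.isEmbedding_val X).isInducing.closure_eq_preimage_closure_image A)).trans
      (Set.image_preimage_eq_of_subset fun f hf => ⟨⟨f, continuous_of_mem_closure hA hf⟩, rfl⟩)
  exact (Cp.isEmbedding_val X).isCompact_iff.2 (himage ▸ hbdd)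
end

section
/- Let X, Y be compact topological spaces and φ : X × Y → [0,1] separately continuous. For x ∈ X let L(x) ∈ [0,1]^Y be the function L(x)(y) = φ(x,y). Then the set {L(x) : x ∈ X} is a closed (hence compact) subset of [0,1]^Y, and every element of its closure in [0,1]^Y is continuous on Y. -/
open Filter Topology

/-- for compact `X`, `Y` and separately continuous `φ : X × Y → [0,1]`,
the set of left slices `{L(x) : x ∈ X}` is closed (hence compact) in `[0,1]^Y`, and
every function in its closure is continuous. -/
theorem stmt_17 {X Y : Type*} [TopologicalSpace X] [TopologicalSpace Y]
    [CompactSpace X] [CompactSpace Y]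
    (φ : X → Y → Set.Icc (0:ℝ) 1)
    (h1 : ∀ x, Continuous (φ x)) (h2 : ∀ y, Continuous fun x => φ x y) :
    IsClosed (Set.range φ) ∧ IsCompact (Set.range φ) ∧
      ∀ g ∈ closure (Set.range φ), Continuous g := by
  have hφ : Continuous φ := continuous_pi h2
  have hcomp : IsCompact (Set.range φ) := isCompact_range hφ
  have hclosed : IsClosed (Set.range φ) := hcomp.isClosed
  refine ⟨hclosed, hcomp, ?_⟩
  intro g hg
  rw [hclosed.closure_eq] at hg
  obtain ⟨x, rfl⟩ := hg
  exact h1 x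
end
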